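/- Let d ≥ 2. For y chosen uniformly at random from P_n, let ξ_n(y) = rk(y)/d^n be the fraction of non-zero eigenvalues of the action matrix A_y. Then the expectation satisfies E ξ_n = R_n/(d^n N_n), where N_n = |P_n| and R_n = Σ_{y ∈ P_n} rk(y), and R_n/(d^n N_n) → 0 as n → ∞; moreover the convergence is exponentially fast, i.e. there are constants C > 0 and q ∈ (0,1) with R_n/(d^n N_n) ≤ C q^n for all n. -/

import Mathlib

/-- A partial injection of `X`, encoded as `X → Option X` injective on its domain. -/
def IsPInj {X : Type*} (f : X → Option X) : Prop :=
  ∀ ⦃x y z : X⦄, f x = some z → f y = some z → x = y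

/-- The set of partial injections (partial bijections) of `X`;
for `X = Fin d` this is the symmetric inverse semigroup `I_d`. -/
abbrev PInj (X : Type*) := {f : X → Option X // IsPInj f}

instance {X : Type*} [Fintype X] [DecidableEq X] : DecidablePred (IsPInj (X := X)) :=
  fun _ => by unfold IsPInj; infer_instance

/-- Iterate of a partial map: `pIter g m` is the `m`-th power of `g` as a partial map,
with `dom (f ∘ g) = {x ∈ dom f : f x ∈ dom g}`. -/
def pIter {α : Type*} (g : α → Option α) : ℕ → α → Option α
  | 0, x => some x
  | m + 1, x => (g x).bind (pIter g m)

/-- The `n`-th partial wreath power `P_n` of the symmetric inverse semigroup `I_d`: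
`P_0` is trivial and `P_{n+1} = {(f, a) : a ∈ I_d, f : dom a → P_n}`. -/
def Pn (d : ℕ) : ℕ → Type
  | 0 => PUnit
  | n + 1 => Σ a : PInj (Fin d), ({x : Fin d // (a.1 x).isSome} → Pn d n)

instance PnFintype (d : ℕ) : ∀ n, Fintype (Pn d n)
  | 0 => inferInstanceAs (Fintype PUnit)
  | n + 1 =>
      letI := PnFintype d n
      inferInstanceAs (Fintype (Σ a : PInj (Fin d), ({x : Fin d // (a.1 x).isSome} → Pn d n)))

/-- The action of `y ∈ P_n` on the `d^n` bottom-level vertices of the `d`-regular rooted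
tree with `n` levels (encoded as paths `Fin n → Fin d`), as a partial injection. -/
def Pn.act {d : ℕ} : ∀ {n : ℕ}, Pn d n → (Fin n → Fin d) → Option (Fin n → Fin d)
  | 0, _, v => some v
  | _ + 1, y, v =>
    if h : (y.1.1 (v 0)).isSome then
      (Pn.act (y.2 ⟨v 0, h⟩) (Fin.tail v)).map
        (fun w => Fin.cons ((y.1.1 (v 0)).get h) w)
    else none

/-- The ultimate rank `rk y = #S(y)`: the number of bottom-level vertices that survive
under the action of all powers of `y`. -/
noncomputable def Pn.rk {d n : ℕ} (y : Pn d n) : ℕ :=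
  Nat.card {v : Fin n → Fin d // ∀ m : ℕ, 1 ≤ m → (pIter (Pn.act y) m v).isSome}


namespace Aux

theorem pIter_zero {α : Type*} (g : α → Option α) (x : α) : pIter g 0 x = some x := rfl

theorem pIter_succ {α : Type*} (g : α → Option α) (m : ℕ) (x : α) :
    pIter g (m+1) x = (g x).bind (pIter g m) := rfl

theorem pIter_add {α : Type*} (g : α → Option α) (a b : ℕ) (x : α) :
    pIter g (a + b) x = (pIter g a x).bind (pIter g b) := by
  induction a generalizing x with
  | zero => simp [pIter_zero]
  | succ a ih =>
      have : a + 1 + b = (a + b) + 1 := by omega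
      rw [this, pIter_succ, pIter_succ]
      cases hg : g x with
      | none => simp
      | some y => simp [ih y]

theorem pIter_one {α : Type*} (g : α → Option α) (x : α) : pIter g 1 x = g x := by
  rw [pIter_succ]
  cases g x <;> simp [pIter_zero]

theorem pIter_succ' {α : Type*} (g : α → Option α) (m : ℕ) (x : α) :
    pIter g (m+1) x = (pIter g m x).bind g := by
  rw [pIter_add g m 1]
  congr 1
  funext y
  exact pIter_one g y

theorem isPInj_pIter {α : Type*} {g : α → Option α} (hg : IsPInj g) (m : ℕ) :
    IsPInj (pIter g m) := by
  induction m with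
  | zero =>
      intro x y z hx hy
      rw [pIter_zero] at hx hy
      simp at hx hy
      exact hx.trans hy.symm
  | succ m ih =>
      intro x y z hx hy
      rw [pIter_succ] at hx hy
      rw [Option.bind_eq_some_iff] at hx hy
      obtain ⟨x', hx1, hx2⟩ := hx
      obtain ⟨y', hy1, hy2⟩ := hy
      have h := ih hx2 hy2
      subst h
      exact hg hx1 hy1

theorem exists_return {α : Type*} [Finite α] {g : α → Option α} (hg : IsPInj g) (x : α)
    (h : ∀ t, (pIter g t x).isSome) : ∃ T, 0 < T ∧ pIter g T x = some x := by
  classical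
  set s : ℕ → α := fun t => (pIter g t x).get (h t) with hs
  have hsome : ∀ t, pIter g t x = some (s t) := fun t => (Option.some_get (h t)).symm
  obtain ⟨a, b, hab, heq⟩ := Finite.exists_ne_map_eq_of_infinite s
  wlog hlt : a < b generalizing a b
  · exact this b a hab.symm heq.symm (by omega)
  set p := b - a with hp
  have hb : b = a + p := by omega
  have h1 : pIter g p (s a) = some (s b) := by
    have := pIter_add g a p x
    rw [← hb, hsome b, hsome a] at this
    simpa using this.symm
  have h2 : pIter g a (s p) = some (s a) := by
    have h1' : pIter g p (s a) = some (s a) := by rw [h1, heq]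
    have := pIter_add g p a x
    rw [Nat.add_comm p a, ← hb, hsome b, hsome p] at this
    simp at this
    rw [← this, heq]
  have hxs : s p = x := isPInj_pIter hg a h2 (hsome a)
  exact ⟨p, by omega, by rw [hsome p, hxs]⟩

theorem pIter_periodic {α : Type*} {g : α → Option α} {x : α} {T : ℕ}
    (hret : pIter g T x = some x) : ∀ q r, pIter g (q * T + r) x = pIter g r x := by
  intro q r
  induction q with
  | zero => simp
  | succ q ih =>
      have : (q+1) * T + r = T + (q * T + r) := by ring
      rw [this, pIter_add, hret]
      simpa using ih

/-- minimal return time and distinctness of the orbit -/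
theorem exists_minimal_return {α : Type*} [Finite α] {g : α → Option α} (hg : IsPInj g) (x : α)
    (h : ∀ t, (pIter g t x).isSome) :
    ∃ T, 0 < T ∧ pIter g T x = some x ∧
      (∀ t, 0 < t → t < T → pIter g t x ≠ some x) ∧
      (∀ t1 t2, t1 < t2 → t2 < T → pIter g t1 x ≠ pIter g t2 x) := by
  classical
  obtain ⟨T0, hT0pos, hT0⟩ := exists_return hg x h
  have hex : ∃ T, 0 < T ∧ pIter g T x = some x := ⟨T0, hT0pos, hT0⟩
  set T := Nat.find hex with hT
  obtain ⟨hTpos, hTret⟩ := Nat.find_spec hex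
  refine ⟨T, hTpos, hTret, ?_, ?_⟩
  · intro t ht htT hcon
    exact (Nat.find_min hex htT) ⟨ht, hcon⟩
  · intro t1 t2 h12 h2T hcon
    set v1 := (pIter g t1 x).get (h t1) with hv1
    have hva : pIter g t1 x = some v1 := (Option.some_get (h t1)).symm
    have hvb : pIter g t2 x = some v1 := hcon.symm.trans hva
    set u := (pIter g (t2 - t1) x).get (h (t2 - t1)) with hu
    have hus : pIter g (t2 - t1) x = some u := (Option.some_get (h _)).symm
    have h2 : pIter g t1 u = some v1 := by
      have h3 := pIter_add g (t2 - t1) t1 x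
      rw [Nat.sub_add_cancel (by omega : t1 ≤ t2), hus, hvb] at h3
      simpa using h3.symm
    have hux : u = x := isPInj_pIter hg t1 h2 hva
    have : pIter g (t2 - t1) x = some x := by rw [hus, hux]
    exact (Nat.find_min hex (by omega : t2 - t1 < Nat.find hex)) ⟨by omega, this⟩

end Aux


section ChainCover
variable {d : ℕ}

/-- evaluation of a chain of partial injections, first element applied first -/
def chainEval : List (PInj (Fin d)) → Fin d → Option (Fin d)
  | [], x => some x
  | b :: l, x => (b.1 x).bind (chainEval l)

theorem chainEval_append (l₁ l₂ : List (PInj (Fin d))) (x : Fin d) :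
    chainEval (l₁ ++ l₂) x = (chainEval l₁ x).bind (chainEval l₂) := by
  induction l₁ generalizing x with
  | nil => simp [chainEval]
  | cons b l ih =>
      simp only [List.cons_append, chainEval]
      cases b.1 x with
      | none => simp
      | some y => simp [ih]

theorem chainEval_singleton (b : PInj (Fin d)) (x : Fin d) :
    chainEval [b] x = b.1 x := by
  simp only [chainEval]
  cases b.1 x <;> simp

theorem chainEval_take_isSome {l : List (PInj (Fin d))} {x : Fin d}
    (h : (chainEval l x).isSome) (t : ℕ) : (chainEval (l.take t) x).isSome := by
  have := chainEval_append (l.take t) (l.drop t) x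
  rw [List.take_append_drop] at this
  rw [this] at h
  cases hc : chainEval (List.take t l) x with
  | none => rw [hc] at h; simp at h
  | some y => rfl

/-- the empty partial injection -/
def pempty : PInj (Fin d) := ⟨fun _ => none, by intro x y z hx; simp at hx⟩

variable {L : ℕ} [NeZero L]

def cover {X : Type*} (step : Fin L → X → Option X) : X × Fin L → Option (X × Fin L) :=
  fun p => (step p.2 p.1).map (fun x => (x, p.2 + 1))

def jL (L : ℕ) [NeZero L] (t : ℕ) : Fin L :=
  ⟨t % L, Nat.mod_lt _ (Nat.pos_of_ne_zero (NeZero.ne L))⟩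

theorem jL_zero : jL L 0 = 0 := by
  apply Fin.ext
  simp [jL]

theorem jL_succ (t : ℕ) : jL L (t + 1) = jL L t + 1 := by
  apply Fin.ext
  simp only [jL, Fin.val_add, Fin.val_one']
  rw [Nat.add_mod]

theorem jL_self : jL L L = 0 := by
  apply Fin.ext
  simp [jL]

theorem isPInj_cover {X : Type*} {step : Fin L → X → Option X}
    (hstep : ∀ j, IsPInj (step j)) : IsPInj (cover step) := by
  rintro ⟨x, j⟩ ⟨y, k⟩ ⟨z, i⟩ hx hy
  simp only [cover, Option.map_eq_some_iff] at hx hy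
  obtain ⟨a, ha, ha2⟩ := hx
  obtain ⟨b, hb, hb2⟩ := hy
  obtain ⟨rfl, hji⟩ := Prod.mk.injEq .. ▸ ha2
  obtain ⟨rfl, hki⟩ := Prod.mk.injEq .. ▸ hb2
  have hjk : j = k := by
    have := hji.trans hki.symm
    exact add_right_cancel this
  subst hjk
  exact Prod.ext (hstep j ha hb) rfl

/-- the top cover map associated to a tuple of partial injections -/
def Phi (bs : Fin L → PInj (Fin d)) : Fin d × Fin L → Option (Fin d × Fin L) :=
  cover (fun j x => (bs j).1 x)

theorem isPInj_Phi (bs : Fin L → PInj (Fin d)) : IsPInj (Phi bs) :=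
  isPInj_cover (fun j => (bs j).2)

theorem pIter_Phi_eq_chainEval (bs : Fin L → PInj (Fin d)) (i : Fin d) :
    ∀ t, t ≤ L →
      pIter (Phi bs) t (i, (0 : Fin L))
        = (chainEval ((List.ofFn bs).take t) i).map (fun x => (x, jL L t)) := by
  intro t
  induction t with
  | zero =>
      intro _
      show some _ = _
      simp [chainEval, jL_zero]
  | succ t ih =>
      intro ht
      have htL : t < L := by omega
      rw [Aux.pIter_succ', ih (by omega)]
      have htake : (List.ofFn bs).take (t + 1)
          = (List.ofFn bs).take t ++ [bs ⟨t, htL⟩] := by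
        rw [List.take_succ]
        congr 1
        have : (List.ofFn bs)[t]? = some (bs ⟨t, htL⟩) := by
          rw [List.getElem?_eq_getElem (by simpa using htL)]
          simp
        rw [this]
        rfl
      rw [htake, chainEval_append]
      cases hc : chainEval ((List.ofFn bs).take t) i with
      | none => simp
      | some x' =>
          simp only [Option.map_some, Option.bind_some, chainEval_singleton]
          have hbj : bs (jL L t) = bs ⟨t, htL⟩ := by
            congr 1
            apply Fin.ext
            simp [jL, Nat.mod_eq_of_lt htL]
          simp only [Phi, cover, hbj]
          cases (bs ⟨t, htL⟩).1 x' with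
          | none => simp
          | some y => simp [jL_succ]

theorem return_of_chain {bs : Fin L → PInj (Fin d)} {i : Fin d}
    (h : chainEval (List.ofFn bs) i = some i) :
    pIter (Phi bs) L (i, (0 : Fin L)) = some (i, 0) := by
  have := pIter_Phi_eq_chainEval bs i L le_rfl
  rw [List.take_of_length_le (by simp), h] at this
  rw [this, jL_self]
  rfl

theorem chain_of_return {bs : Fin L → PInj (Fin d)} {i : Fin d}
    (h : pIter (Phi bs) L (i, (0 : Fin L)) = some (i, 0)) :
    chainEval (List.ofFn bs) i = some i := by
  have := pIter_Phi_eq_chainEval bs i L le_rfl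
  rw [List.take_of_length_le (by simp)] at this
  rw [this] at h
  cases hc : chainEval (List.ofFn bs) i with
  | none => rw [hc] at h; simp at h
  | some x => rw [hc] at h; simp at h; rw [h.1]

theorem all_defined_of_chain {bs : Fin L → PInj (Fin d)} {i : Fin d}
    (h : chainEval (List.ofFn bs) i = some i) :
    ∀ t, (pIter (Phi bs) t (i, (0 : Fin L))).isSome := by
  intro t
  have hret := return_of_chain h
  have hdiv : t = (t / L) * L + t % L := by rw [Nat.mul_comm]; exact (Nat.div_add_mod t L).symm
  rw [hdiv, Aux.pIter_periodic hret]
  have hrL : t % L ≤ L := le_of_lt (Nat.mod_lt _ (Nat.pos_of_ne_zero (NeZero.ne L)))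
  rw [pIter_Phi_eq_chainEval bs i _ hrL]
  have : (chainEval ((List.ofFn bs).take (t % L)) i).isSome :=
    chainEval_take_isSome (by rw [h]; rfl) _
  rw [Option.isSome_map]
  exact this

end ChainCover


section ActMaster
variable {d : ℕ}

theorem Pn.act_succ {m : ℕ} (y : Pn d (m+1)) (v : Fin (m+1) → Fin d) :
    Pn.act y v = if h : (y.1.1 (v 0)).isSome then
      (Pn.act (y.2 ⟨v 0, h⟩) (Fin.tail v)).map
        (fun w => Fin.cons ((y.1.1 (v 0)).get h) w)
    else none := rfl

theorem Pn.act_succ_some_iff {m : ℕ} (y : Pn d (m+1)) (v : Fin (m+1) → Fin d)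
    (w' : Fin (m+1) → Fin d) :
    Pn.act y v = some w' ↔ ∃ h : (y.1.1 (v 0)).isSome, ∃ z,
      Pn.act (y.2 ⟨v 0, h⟩) (Fin.tail v) = some z ∧
      w' = Fin.cons ((y.1.1 (v 0)).get h) z := by
  rw [Pn.act_succ]
  split
  · rename_i h
    simp only [Option.map_eq_some_iff]
    constructor
    · rintro ⟨z, hz, rfl⟩; exact ⟨h, z, hz, rfl⟩
    · rintro ⟨h', z, hz, rfl⟩; exact ⟨z, hz, rfl⟩
  · rename_i h
    constructor
    · intro hcon; exact absurd hcon (by simp)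
    · rintro ⟨h', _⟩; exact absurd h' h

variable {m L : ℕ} [NeZero L]

def Psi (ys : Fin L → Pn d m) : (Fin m → Fin d) × Fin L → Option ((Fin m → Fin d) × Fin L) :=
  cover (fun j v => Pn.act (ys j) v)

def Surv (ys : Fin L → Pn d m) (w : Fin m → Fin d) : Prop :=
  ∀ t, (pIter (Psi ys) t (w, (0 : Fin L))).isSome

/-- projection from level `m+1` to the top cover -/
theorem proj_top (ys : Fin L → Pn d (m+1)) (w : Fin (m+1) → Fin d) :
    ∀ t p, pIter (Psi ys) t (w, (0 : Fin L)) = some p →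
      pIter (Phi (fun j => (ys j).1)) t (w 0, (0 : Fin L)) = some (p.1 0, p.2) := by
  intro t
  induction t with
  | zero =>
      intro p hp
      rw [pIter] at hp ⊢
      obtain rfl : (w, (0 : Fin L)) = p := by simpa using hp
      rfl
  | succ t ih =>
      intro p hp
      rw [Aux.pIter_succ'] at hp ⊢
      rw [Option.bind_eq_some_iff] at hp
      obtain ⟨p₀, hp₀, hstep⟩ := hp
      rw [ih p₀ hp₀]
      simp only [Psi, cover, Option.map_eq_some_iff] at hstep
      obtain ⟨w', hw', rfl⟩ := hstep
      rw [Pn.act_succ_some_iff] at hw'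
      obtain ⟨h, z, hz, rfl⟩ := hw'
      simp only [Phi, cover, Option.bind_some]
      obtain ⟨c, hc⟩ := Option.isSome_iff_exists.mp h
      have hgc : ((ys p₀.2).1.1 (p₀.1 0)).get h = c := Option.get_of_mem h (Option.mem_def.mpr hc)
      rw [Fin.cons_zero, hgc, hc]
      rfl

theorem hTop_of_Surv {ys : Fin L → Pn d (m+1)} {w : Fin (m+1) → Fin d}
    (hS : Surv ys w) (t : ℕ) :
    (pIter (Phi (fun j => (ys j).1)) t (w 0, (0 : Fin L))).isSome := by
  obtain ⟨p, hp⟩ := Option.isSome_iff_exists.mp (hS t)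
  rw [proj_top ys w t p hp]
  rfl

/-- the main extraction: from survival at level `m+1`, produce the return time `T`,
the embedding of the orbit into the domain pairs, and survival of the tail under the
extracted list of level-`m` components. -/
theorem step_extract (bs : Fin L → PInj (Fin d))
    (w : Fin (m+1) → Fin d)
    (hEx : ∃ fs : ∀ j, {x : Fin d // ((bs j).1 x).isSome} → Pn d m,
      Surv (d := d) (m := m+1) (fun j => (⟨bs j, fs j⟩ : Pn d (m+1))) w) :
    ∃ T : ℕ, 0 < T ∧ ∃ _ : NeZero T,
    ∃ ι : Fin T → (Σ j : Fin L, {x : Fin d // ((bs j).1 x).isSome}),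
      Function.Injective ι ∧
      (∀ fs : ∀ j, {x : Fin d // ((bs j).1 x).isSome} → Pn d m,
        Surv (d := d) (m := m+1) (fun j => (⟨bs j, fs j⟩ : Pn d (m+1))) w →
        Surv (fun s => fs (ι s).1 (ι s).2) (Fin.tail w)) ∧
      ((chainEval (List.ofFn bs) (w 0) = some (w 0) → T = L) ∧
       (chainEval (List.ofFn bs) (w 0) ≠ some (w 0) → 2 * L ≤ T)) := by
  classical
  set i : Fin d := w 0 with hi
  have hTop : ∀ t, (pIter (Phi bs) t (i, (0 : Fin L))).isSome := by
    intro t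
    obtain ⟨fs0, hS0⟩ := hEx
    have := hTop_of_Surv hS0 t
    exact this
  -- minimal return time
  obtain ⟨T, hTpos, hret, hmin, hdist⟩ :=
    Aux.exists_minimal_return (isPInj_Phi bs) (i, (0 : Fin L)) hTop
  haveI : NeZero T := ⟨hTpos.ne'⟩
  -- the state sequence
  set xval : ℕ → Fin d := fun t => ((pIter (Phi bs) t (i, 0)).get (hTop t)).1 with hxval
  have topPair : ∀ t, pIter (Phi bs) t (i, (0 : Fin L)) = some (xval t, jL L t) := by
    intro t
    induction t with
    | zero => rw [jL_zero]; rfl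
    | succ t ih =>
        have h1 := hTop (t+1)
        rw [Aux.pIter_succ'] at h1 ⊢
        rw [ih] at h1 ⊢
        simp only [Option.bind_some, Phi, cover] at h1 ⊢
        obtain ⟨c, hc⟩ := Option.isSome_iff_exists.mp
          (by simpa using h1 : ((bs (jL L t)).1 (xval t)).isSome)
        rw [hc]
        simp only [Option.map_some]
        have hxc : xval (t+1) = c := by
          have h2 : pIter (Phi bs) (t+1) (i, (0:Fin L)) = some (c, jL L t + 1) := by
            rw [Aux.pIter_succ', ih]
            simp only [Option.bind_some, Phi, cover, hc, Option.map_some]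
          simp only [hxval, h2]
          rfl
        rw [hxc, jL_succ]
  have hstep : ∀ t, (bs (jL L t)).1 (xval t) = some (xval (t+1)) := by
    intro t
    have h1 := topPair (t+1)
    rw [Aux.pIter_succ', topPair t] at h1
    simp only [Option.bind_some, Phi, cover] at h1
    cases hc : (bs (jL L t)).1 (xval t) with
    | none => rw [hc] at h1; simp at h1
    | some c =>
        rw [hc] at h1
        simp only [Option.map_some, Option.some.injEq, Prod.mk.injEq] at h1
        rw [h1.1]
  have hbs_mem : ∀ t, ((bs (jL L t)).1 (xval t)).isSome := by
    intro t; rw [hstep t]; rfl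
  -- periodicity
  have hstate : ∀ t, pIter (Phi bs) (t % T) (i, (0:Fin L)) = pIter (Phi bs) t (i, 0) := by
    intro t
    conv_rhs => rw [show t = (t / T) * T + t % T by
      rw [Nat.mul_comm]; exact (Nat.div_add_mod t T).symm]
    rw [Aux.pIter_periodic hret]
  have hper : ∀ t, xval (t % T) = xval t ∧ jL L (t % T) = jL L t := by
    intro t
    have h1 := topPair (t % T)
    rw [hstate t, topPair t] at h1
    simp only [Option.some.injEq, Prod.mk.injEq] at h1
    exact ⟨h1.1.symm, h1.2.symm⟩
  set ι : Fin T → (Σ j : Fin L, {x : Fin d // ((bs j).1 x).isSome}) :=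
    fun s => ⟨jL L s.val, ⟨xval s.val, hbs_mem s.val⟩⟩ with hι
  have hmod : T % L = 0 := by
    have h1 := topPair T
    rw [hret] at h1
    have h2 := Option.some.inj h1
    have h3 : (0 : Fin L) = jL L T := congrArg Prod.snd h2
    have h4 := congrArg Fin.val h3
    simpa [jL] using h4.symm
  have perfs : ∀ fs : ∀ j, {x : Fin d // ((bs j).1 x).isSome} → Pn d m,
      Surv (d := d) (m := m+1) (fun j => (⟨bs j, fs j⟩ : Pn d (m+1))) w →
      Surv (fun s => fs (ι s).1 (ι s).2) (Fin.tail w) := by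
    intro fs hS
    set ys : Fin L → Pn d (m+1) := fun j => ⟨bs j, fs j⟩ with hys
    have fs_congr : ∀ {j₁ j₂ : Fin L} (_ : j₁ = j₂) {x₁ x₂ : Fin d} (_ : x₁ = x₂)
        (h₁ : ((bs j₁).1 x₁).isSome) (h₂ : ((bs j₂).1 x₂).isSome),
        fs j₁ ⟨x₁, h₁⟩ = fs j₂ ⟨x₂, h₂⟩ := by
      rintro j₁ _ rfl x₁ _ rfl h₁ h₂
      rfl
    set gl : Fin T → Pn d m := fun s => fs (ι s).1 (ι s).2 with hgl
    have hgl_eq : ∀ (t : ℕ) (h : ((bs (jL L t)).1 (xval t)).isSome),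
        gl (jL T t) = fs (jL L t) ⟨xval t, h⟩ := by
      intro t h
      have hj : (jL T t).val = t % T := rfl
      simp only [hgl, hι]
      exact fs_congr (by show jL L (jL T t).val = jL L t; rw [hj]; exact (hper t).2) (by show xval (jL T t).val = xval t; rw [hj]; exact (hper t).1) _ _
    have master : ∀ t, ∃ z, pIter (Psi ys) t (w, (0:Fin L)) = some (Fin.cons (xval t) z, jL L t)
        ∧ pIter (Psi gl) t (Fin.tail w, (0 : Fin T)) = some (z, jL T t) := by
      intro t
      induction t with
      | zero =>
          refine ⟨Fin.tail w, ?_, ?_⟩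
          · rw [jL_zero]
            show some (w, 0) = _
            rw [show xval 0 = w 0 from rfl, Fin.cons_self_tail]
          · rw [jL_zero]; rfl
      | succ t ih =>
          obtain ⟨z, h1, h2⟩ := ih
          have hSt := hS (t+1)
          rw [Aux.pIter_succ', h1, Option.bind_some] at hSt
          simp only [Psi, cover] at hSt
          obtain ⟨w', hw'⟩ := Option.isSome_iff_exists.mp (by simpa using hSt :
            (Pn.act (ys (jL L t)) (Fin.cons (xval t) z)).isSome)
          rw [Pn.act_succ_some_iff] at hw'
          obtain ⟨h, z', hz', rfl⟩ := hw'
          have hc0 : (Fin.cons (xval t) z : Fin (m+1) → Fin d) 0 = xval t := Fin.cons_zero _ _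
          have hbse : (ys (jL L t)).1 = bs (jL L t) := rfl
          have hget : ((ys (jL L t)).1.1 ((Fin.cons (xval t) z : Fin (m+1) → Fin d) 0)).get h
              = xval (t+1) := by
            refine Option.get_of_mem h (Option.mem_def.mpr ?_)
            rw [hbse, hc0]; exact hstep t
          have hcomp : Pn.act (gl (jL T t)) z = some z' := by
            have he : gl (jL T t) = (ys (jL L t)).2 ⟨(Fin.cons (xval t) z : Fin (m+1) → Fin d) 0, h⟩ := by
              have h' : ((bs (jL L t)).1 (xval t)).isSome := hbs_mem t
              rw [hgl_eq t h']
              exact fs_congr rfl hc0.symm h' _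
            rw [he]
            exact hz'
          refine ⟨z', ?_, ?_⟩
          · rw [Aux.pIter_succ', h1, Option.bind_some]
            simp only [Psi, cover]
            rw [show Pn.act (ys (jL L t)) (Fin.cons (xval t) z)
                = some (Fin.cons ((ys (jL L t)).1.1 ((Fin.cons (xval t) z : Fin (m+1) → Fin d) 0) |>.get h) z') from by
              rw [Pn.act_succ_some_iff]; exact ⟨h, z', hz', rfl⟩]
            rw [jL_succ]
            simp only [Option.map_some]
            rw [hget]
          · rw [Aux.pIter_succ', h2, Option.bind_some]
            simp only [Psi, cover]
            rw [hcomp, jL_succ]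
            rfl
    intro t
    obtain ⟨z, _, h2⟩ := master t
    rw [h2]
    rfl
  refine ⟨T, hTpos, ⟨hTpos.ne'⟩, ι, ?_, ?_, ?_, ?_⟩
  · -- injectivity
    intro s₁ s₂ hss
    have hj : jL L s₁.val = jL L s₂.val := congrArg Sigma.fst hss
    have hx : xval s₁.val = xval s₂.val :=
      congrArg (fun p : (Σ j : Fin L, {x : Fin d // ((bs j).1 x).isSome}) => p.2.val) hss
    have hstateeq : pIter (Phi bs) s₁.val (i, (0:Fin L)) = pIter (Phi bs) s₂.val (i, 0) := by
      rw [topPair, topPair, hj, hx]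
    rcases lt_trichotomy s₁ s₂ with hlt | heq | hlt
    · exact absurd hstateeq (hdist _ _ hlt s₂.isLt)
    · exact heq
    · exact absurd hstateeq.symm (hdist _ _ hlt s₁.isLt)
  · exact perfs
  · -- chain implies T = L
    intro hchain
    have hretL : pIter (Phi bs) L (i, (0:Fin L)) = some (i, 0) := return_of_chain hchain
    have hLpos : 0 < L := Nat.pos_of_ne_zero (NeZero.ne L)
    obtain ⟨c, hc⟩ := Nat.dvd_of_mod_eq_zero hmod
    rcases Nat.lt_or_ge L T with hcon | hle
    · exact absurd hretL (hmin L hLpos hcon)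
    · have hc1 : 0 < c := by
        rcases Nat.eq_zero_or_pos c with rfl | h
        · omega
        · exact h
      have hLT : L ≤ T := by
        have := Nat.mul_le_mul_left L hc1
        calc L = L * 1 := (Nat.mul_one L).symm
          _ ≤ L * c := Nat.mul_le_mul_left L hc1
          _ = T := hc.symm
      omega
  · -- no chain return implies T at least 2 * L
    intro hchain
    have hTL : T ≠ L := by
      intro hcon
      subst hcon
      exact hchain (chain_of_return hret)
    have hLpos : 0 < L := Nat.pos_of_ne_zero (NeZero.ne L)
    obtain ⟨c, hc⟩ := Nat.dvd_of_mod_eq_zero hmod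
    have hc2 : 2 ≤ c := by
      rcases Nat.lt_or_ge c 2 with h | h
      · interval_cases c <;> omega
      · exact h
    calc 2 * L = L * 2 := Nat.mul_comm 2 L
      _ ≤ L * c := Nat.mul_le_mul_left L hc2
      _ = T := hc.symm

end ActMaster


section Counting
variable {d : ℕ}

theorem nat_card_sigma {ι : Type*} [Fintype ι] (F : ι → Type*) [∀ i, Finite (F i)] :
    Nat.card (Σ i, F i) = ∑ i, Nat.card (F i) := by
  classical
  letI : ∀ i, Fintype (F i) := fun i => Fintype.ofFinite _
  rw [Nat.card_eq_fintype_card, Fintype.card_sigma]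
  exact Finset.sum_congr rfl (fun i _ => (Nat.card_eq_fintype_card).symm)

theorem nat_card_subtype_sigma {β : Type*} {G : β → Type*} (Q : (Σ b, G b) → Prop) :
    Nat.card {p : Σ b, G b // Q p} = Nat.card (Σ b, {g : G b // Q ⟨b, g⟩}) := by
  apply Nat.card_congr
  exact {
    toFun := fun p => ⟨p.1.1, ⟨p.1.2, by cases p with | mk p hp => cases p; exact hp⟩⟩
    invFun := fun q => ⟨⟨q.1, q.2.1⟩, q.2.2⟩
    left_inv := fun p => by cases p with | mk p hp => cases p; rfl
    right_inv := fun q => by cases q with | mk b g => cases g; rfl }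

/-- tuples of sigmas as a sigma of tuples -/
def tupleSigmaEquiv {ι β : Type*} (G : β → Type*) :
    (ι → Σ b, G b) ≃ Σ bs : ι → β, ∀ j, G (bs j) where
  toFun h := ⟨fun j => (h j).1, fun j => (h j).2⟩
  invFun p := fun j => ⟨p.1 j, p.2 j⟩
  left_inv h := by funext j; rfl
  right_inv p := by cases p; rfl

theorem card_comp_le {I P : Type*} [Fintype I] [Fintype P] {T : ℕ}
    (ι : Fin T → I) (hι : Function.Injective ι) (Q : (Fin T → P) → Prop) :
    Nat.card {F : I → P // Q (F ∘ ι)}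
      ≤ Nat.card {G : Fin T → P // Q G} * (Fintype.card P) ^ (Fintype.card I - T) := by
  classical
  have hinj : Function.Injective
      (fun (F : {F : I → P // Q (F ∘ ι)}) =>
        ((⟨F.1 ∘ ι, F.2⟩ : {G : Fin T → P // Q G}),
          (fun x : {x : I // x ∉ Set.range ι} => F.1 x.1))) := by
    intro F₁ F₂ h
    rw [Prod.mk.injEq, Subtype.mk.injEq] at h
    apply Subtype.ext
    funext x
    by_cases hx : x ∈ Set.range ι
    · obtain ⟨t, rfl⟩ := hx
      exact congrFun h.1 t
    · exact congrFun h.2 ⟨x, hx⟩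
  have hb := Nat.card_le_card_of_injective _ hinj
  rw [Nat.card_prod] at hb
  refine hb.trans (le_of_eq ?_)
  have hc : Fintype.card {x : I // x ∈ Set.range ι} = T := by
    rw [← Nat.card_eq_fintype_card]
    have h1 : Nat.card (Set.range ι) = Nat.card (Fin T) := Nat.card_range_of_injective hι
    rw [h1, Nat.card_eq_fintype_card, Fintype.card_fin]
  congr 1
  rw [Nat.card_eq_fintype_card, Fintype.card_fun, Fintype.card_subtype_compl, hc]
end Counting


section Weights
variable {d : ℕ}

def domCard (b : PInj (Fin d)) : ℕ := Fintype.card {x : Fin d // (b.1 x).isSome}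

def pswap (e : Equiv.Perm (Fin d)) (b : PInj (Fin d)) : PInj (Fin d) :=
  ⟨fun x => (b.1 x).map e, by
    intro x y z hx hy
    rw [Option.map_eq_some_iff] at hx hy
    obtain ⟨a, ha, rfl⟩ := hx
    obtain ⟨a', ha', he⟩ := hy
    have : a' = a := e.injective he
    subst this
    exact b.2 ha ha'⟩

theorem domCard_pswap (e : Equiv.Perm (Fin d)) (b : PInj (Fin d)) :
    domCard (pswap e b) = domCard b := by
  unfold domCard
  apply Fintype.card_congr
  apply Equiv.subtypeEquivRight
  intro x
  simp [pswap]

theorem pswap_pswap (e : Equiv.Perm (Fin d)) (he : ∀ a, e (e a) = a) (b : PInj (Fin d)) :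
    pswap e (pswap e b) = b := by
  apply Subtype.ext
  funext x
  simp only [pswap, Option.map_map]
  have : (⇑e ∘ ⇑e) = id := funext he
  rw [this]
  cases b.1 x <;> rfl

theorem ofFn_take_concat {α : Type*} {L : ℕ} (hL : 0 < L) (f : Fin L → α) :
    List.ofFn f = ((List.ofFn f).take (L-1)) ++ [f ⟨L-1, by omega⟩] := by
  apply List.ext_getElem
  · simp; omega
  · intro n h1 h2
    rw [List.getElem_append]
    split
    · rw [List.getElem_take]
    · rename_i hn
      simp only [List.length_take, List.length_ofFn] at hn
      simp only [List.length_ofFn] at h1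
      have hn' : n = L - 1 := by omega
      subst hn'
      simp [List.getElem_ofFn]

theorem take_ofFn_update {α : Type*} {L : ℕ} (hL : 0 < L) (f : Fin L → α) (v : α) :
    (List.ofFn (Function.update f ⟨L-1, by omega⟩ v)).take (L-1)
      = (List.ofFn f).take (L-1) := by
  apply List.ext_getElem
  · simp
  · intro n h1 h2
    rw [List.getElem_take, List.getElem_take, List.getElem_ofFn, List.getElem_ofFn]
    simp only [List.length_take, List.length_ofFn] at h1
    have : (⟨n, by omega⟩ : Fin L) ≠ ⟨L-1, by omega⟩ := by
      intro hcon
      have := congrArg Fin.val hcon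
      simp at this
      omega
    exact Function.update_of_ne this v f

theorem chain_swap {L : ℕ} (hL : 0 < L) (e : Equiv.Perm (Fin d))
    (f : Fin L → PInj (Fin d)) (x : Fin d) :
    chainEval (List.ofFn (Function.update f ⟨L-1, by omega⟩ (pswap e (f ⟨L-1, by omega⟩)))) x
      = (chainEval (List.ofFn f) x).map e := by
  rw [ofFn_take_concat hL (Function.update f ⟨L-1, by omega⟩ (pswap e (f ⟨L-1, by omega⟩))),
    ofFn_take_concat hL f, take_ofFn_update hL, chainEval_append, chainEval_append]
  rw [Function.update_self]
  cases chainEval ((List.ofFn f).take (L-1)) x with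
  | none => simp
  | some y =>
      simp only [Option.bind_some, Option.map_some, chainEval_singleton]
      simp [pswap]

theorem two_mul_filter_sum_le {L : ℕ} [NeZero L] (hd : 2 ≤ d) (i : Fin d)
    (g : PInj (Fin d) → ℕ) (hg : ∀ e b, g (pswap e b) = g b) :
    2 * ∑ bs ∈ Finset.univ.filter
        (fun bs : Fin L → PInj (Fin d) => chainEval (List.ofFn bs) i = some i),
        ∏ j, g (bs j)
      ≤ ∑ bs : Fin L → PInj (Fin d), ∏ j, g (bs j) := by
  classical
  have hL : 0 < L := Nat.pos_of_ne_zero (NeZero.ne L)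
  obtain ⟨i', hi'⟩ : ∃ i' : Fin d, i' ≠ i := by
    rcases Decidable.eq_or_ne i ⟨0, by omega⟩ with h | h
    · exact ⟨⟨1, by omega⟩, by rw [h]; intro hcon; have := congrArg Fin.val hcon; simp at this⟩
    · exact ⟨⟨0, by omega⟩, fun hcon => h hcon.symm⟩
  set e : Equiv.Perm (Fin d) := Equiv.swap i i' with hE
  have heinv : ∀ a, e (e a) = a := fun a => Equiv.swap_apply_self i i' a
  set k : Fin L := ⟨L-1, by omega⟩ with hk
  set J : (Fin L → PInj (Fin d)) → (Fin L → PInj (Fin d)) :=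
    fun bs => Function.update bs k (pswap e (bs k)) with hJ
  have hJJ : ∀ bs, J (J bs) = bs := by
    intro bs
    funext j
    rcases Decidable.eq_or_ne j k with rfl | hj
    · simp only [hJ, Function.update_self]
      rw [pswap_pswap e heinv]
    · simp only [hJ, Function.update_of_ne hj]
  have hWJ : ∀ bs, (∏ j, g (J bs j)) = ∏ j, g (bs j) := by
    intro bs
    apply Finset.prod_congr rfl
    intro j _
    rcases Decidable.eq_or_ne j k with rfl | hj
    · simp only [hJ, Function.update_self, hg]
    · simp only [hJ, Function.update_of_ne hj]
  set A := Finset.univ.filter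
      (fun bs : Fin L → PInj (Fin d) => chainEval (List.ofFn bs) i = some i) with hA
  set A' := A.image J with hA'
  have hsum : ∑ bs ∈ A', ∏ j, g (bs j) = ∑ bs ∈ A, ∏ j, g (bs j) := by
    rw [hA', Finset.sum_image (by intro a _ b _ hab; rw [← hJJ a, hab, hJJ])]
    exact Finset.sum_congr rfl (fun bs _ => hWJ bs)
  have hdisj : Disjoint A A' := by
    rw [Finset.disjoint_right]
    intro bs hbs' hbs
    rw [hA', Finset.mem_image] at hbs'
    obtain ⟨cs, hcs, rfl⟩ := hbs'
    rw [hA, Finset.mem_filter] at hbs hcs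
    have hchain : chainEval (List.ofFn (J cs)) i = some (e i) := by
      have := chain_swap hL e cs i
      rw [hcs.2] at this
      simpa [hJ, hk] using this
    rw [hbs.2] at hchain
    have : i = e i := by injection hchain
    rw [hE, Equiv.swap_apply_left] at this
    exact hi' this.symm
  calc 2 * ∑ bs ∈ A, ∏ j, g (bs j)
      = (∑ bs ∈ A, ∏ j, g (bs j)) + ∑ bs ∈ A', ∏ j, g (bs j) := by rw [hsum]; ring
    _ = ∑ bs ∈ A ∪ A', ∏ j, g (bs j) := (Finset.sum_union hdisj).symm
    _ ≤ ∑ bs : Fin L → PInj (Fin d), ∏ j, g (bs j) :=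
        Finset.sum_le_sum_of_subset (Finset.subset_univ _)

end Weights


section CardPn
variable {d : ℕ}

theorem nat_card_fun_eq {A B : Type*} [Fintype A] [Finite B] :
    Nat.card (A → B) = (Nat.card B) ^ (Fintype.card A) := by
  rw [Nat.card_pi, Finset.prod_const, Finset.card_univ]

theorem Pn_card_succ (m : ℕ) :
    Nat.card (Pn d (m+1)) = ∑ b : PInj (Fin d), (Nat.card (Pn d m)) ^ (domCard b) := by
  have h1 : Nat.card (Pn d (m+1))
      = Nat.card (Σ b : PInj (Fin d), ({x : Fin d // (b.1 x).isSome} → Pn d m)) := rfl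
  rw [h1, nat_card_sigma]
  exact Finset.sum_congr rfl (fun b _ => nat_card_fun_eq)

theorem sum_weight {m L : ℕ} [NeZero L] :
    ∑ bs : Fin L → PInj (Fin d), ∏ j : Fin L, (Nat.card (Pn d m)) ^ (domCard (bs j))
      = (Nat.card (Pn d (m+1))) ^ L := by
  classical
  rw [Pn_card_succ]
  symm
  calc (∑ b : PInj (Fin d), Nat.card (Pn d m) ^ domCard b) ^ L
      = ∏ _j : Fin L, ∑ b : PInj (Fin d), Nat.card (Pn d m) ^ domCard b := by
        rw [Finset.prod_const, Finset.card_univ, Fintype.card_fin]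
    _ = ∑ bs ∈ Fintype.piFinset (fun _ : Fin L => Finset.univ),
          ∏ j : Fin L, Nat.card (Pn d m) ^ domCard (bs j) :=
        Finset.prod_univ_sum _ _
    _ = ∑ bs : Fin L → PInj (Fin d), ∏ j : Fin L, Nat.card (Pn d m) ^ domCard (bs j) := by
        rw [Fintype.piFinset_univ]

/-- the number of partial injections with `x` in the domain is less than the total -/
theorem card_dom_lt (x : Fin d) :
    Nat.card {b : PInj (Fin d) // ((b.1 x).isSome)} < Nat.card (PInj (Fin d)) := by
  classical
  rw [Nat.card_eq_fintype_card, Nat.card_eq_fintype_card]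
  exact Fintype.card_subtype_lt (x := pempty) (by simp [pempty])

theorem chain_count (x : Fin d) :
    ∀ (K : ℕ), Nat.card {bs : Fin K → PInj (Fin d) //
        (chainEval (List.ofFn bs) x).isSome}
      ≤ (Nat.card (PInj (Fin d)) - 1) ^ K := by
  intro K
  induction K generalizing x with
  | zero =>
      have : Nat.card {bs : Fin 0 → PInj (Fin d) // (chainEval (List.ofFn bs) x).isSome}
          ≤ Nat.card (Fin 0 → PInj (Fin d)) :=
        Nat.card_le_card_of_injective _ Subtype.val_injective
      rw [nat_card_fun_eq] at this
      simpa using this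
  | succ K ih =>
      have key : ∀ (bs : Fin (K+1) → PInj (Fin d)),
          (chainEval (List.ofFn bs) x).isSome →
          ∃ h0 : ((bs 0).1 x).isSome,
            (chainEval (List.ofFn (fun s : Fin K => bs s.succ)) (((bs 0).1 x).get h0)).isSome := by
        intro bs hbs
        rw [List.ofFn_succ] at hbs
        simp only [chainEval] at hbs
        have h0 : ((bs 0).1 x).isSome := by
          cases hc : (bs 0).1 x with
          | none => rw [hc] at hbs; simp at hbs
          | some a => rfl
        refine ⟨h0, ?_⟩
        obtain ⟨a, hc⟩ := Option.isSome_iff_exists.mp h0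
        have hget : ((bs 0).1 x).get h0 = a := Option.get_of_mem _ hc
        rw [hget]
        rw [hc] at hbs
        simpa using hbs
      set Φ : {bs : Fin (K+1) → PInj (Fin d) // (chainEval (List.ofFn bs) x).isSome} →
          Σ b : {b : PInj (Fin d) // ((b.1 x).isSome)},
            {cs : Fin K → PInj (Fin d) // (chainEval (List.ofFn cs) ((b.1.1 x).get b.2)).isSome} :=
        fun bs => ⟨⟨bs.1 0, (key bs.1 bs.2).choose⟩,
          ⟨fun s => bs.1 s.succ, (key bs.1 bs.2).choose_spec⟩⟩ with hΦ
      have hinj : Function.Injective Φ := by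
        intro bs₁ bs₂ h
        have h1 : bs₁.1 0 = bs₂.1 0 := by
          have := congrArg (fun q : (Σ b : {b : PInj (Fin d) // ((b.1 x).isSome)},
            {cs : Fin K → PInj (Fin d) // (chainEval (List.ofFn cs) ((b.1.1 x).get b.2)).isSome}) =>
              (q.1.1 : PInj (Fin d))) h
          exact this
        have h2 : (fun s : Fin K => bs₁.1 s.succ) = (fun s : Fin K => bs₂.1 s.succ) := by
          have := congrArg (fun q : (Σ b : {b : PInj (Fin d) // ((b.1 x).isSome)},
            {cs : Fin K → PInj (Fin d) // (chainEval (List.ofFn cs) ((b.1.1 x).get b.2)).isSome}) =>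
              (q.2.1 : Fin K → PInj (Fin d))) h
          exact this
        apply Subtype.ext
        funext s
        refine Fin.cases ?_ ?_ s
        · exact h1
        · intro s'
          exact congrFun h2 s'
      have hle := Nat.card_le_card_of_injective Φ hinj
      rw [nat_card_sigma] at hle
      refine hle.trans ?_
      have hsum : ∀ b : {b : PInj (Fin d) // ((b.1 x).isSome)},
          Nat.card {cs : Fin K → PInj (Fin d) //
              (chainEval (List.ofFn cs) ((b.1.1 x).get b.2)).isSome}
            ≤ (Nat.card (PInj (Fin d)) - 1) ^ K := fun b => ih _
      refine (Finset.sum_le_sum (fun b _ => hsum b)).trans ?_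
      rw [Finset.sum_const, Finset.card_univ, smul_eq_mul]
      have hcard : Fintype.card {b : PInj (Fin d) // ((b.1 x).isSome)}
          ≤ Nat.card (PInj (Fin d)) - 1 := by
        have := card_dom_lt x
        simp only [Nat.card_eq_fintype_card] at this ⊢
        omega
      calc Fintype.card {b : PInj (Fin d) // ((b.1 x).isSome)} * (Nat.card (PInj (Fin d)) - 1) ^ K
          ≤ (Nat.card (PInj (Fin d)) - 1) * (Nat.card (PInj (Fin d)) - 1) ^ K :=
            Nat.mul_le_mul_right _ hcard
        _ = (Nat.card (PInj (Fin d)) - 1) ^ (K+1) := by ring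

noncomputable def Uc (d m L : ℕ) [NeZero L] (w : Fin m → Fin d) : ℕ :=
  Nat.card {ys : Fin L → Pn d m // Surv ys w}

theorem Uc_succ_eq {m L : ℕ} [NeZero L] (w : Fin (m+1) → Fin d) :
    Uc d (m+1) L w = ∑ bs : Fin L → PInj (Fin d),
      Nat.card {fs : ∀ j, ({x : Fin d // ((bs j).1 x).isSome} → Pn d m) //
        Surv (d := d) (m := m+1) (fun j => (⟨bs j, fs j⟩ : Pn d (m+1))) w} := by
  rw [Uc, ← nat_card_sigma]
  apply Nat.card_congr
  refine {
    toFun := fun ys => ⟨fun j => (ys.1 j).1, ⟨fun j => (ys.1 j).2, ?_⟩⟩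
    invFun := fun q => ⟨fun j => ⟨q.1 j, q.2.1 j⟩, q.2.2⟩
    left_inv := ?_
    right_inv := ?_ }
  · have : (fun j => (⟨(ys.1 j).1, (ys.1 j).2⟩ : Pn d (m+1))) = ys.1 := by
      funext j
      rfl
    rw [this]
    exact ys.2
  · intro ys
    apply Subtype.ext
    funext j
    rfl
  · rintro ⟨bs, fs, h⟩
    rfl

end CardPn


section MainBound
variable {d : ℕ}

def pid : PInj (Fin d) := ⟨fun x => some x, by intro x y z hx hy; injection hx; injection hy; omega⟩

theorem Pn_nonempty : ∀ n, Nonempty (Pn d n)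
  | 0 => ⟨PUnit.unit⟩
  | _n+1 => ⟨⟨pempty, fun x => absurd x.2 (by simp [pempty])⟩⟩

theorem NI_two (hd : 2 ≤ d) : 2 ≤ Nat.card (PInj (Fin d)) := by
  rw [Nat.card_eq_fintype_card]
  refine Fintype.one_lt_card_iff_nontrivial.mpr ⟨⟨pempty, pid, ?_⟩⟩
  intro h
  have := congrFun (congrArg Subtype.val h) ⟨0, by omega⟩
  simp [pempty, pid] at this

theorem Pn_card_one : Nat.card (Pn d 1) = Nat.card (PInj (Fin d)) := by
  rw [Pn_card_succ]
  have h0 : Nat.card (Pn d 0) = 1 := Nat.card_eq_one_iff_unique.mpr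
    ⟨inferInstanceAs (Subsingleton PUnit), inferInstanceAs (Nonempty PUnit)⟩
  simp only [h0, one_pow, Finset.sum_const, Finset.card_univ, smul_eq_mul, mul_one]
  rw [Nat.card_eq_fintype_card]

theorem main_bound (hd : 2 ≤ d) :
    ∀ (m K : ℕ) (w : Fin (m+1) → Fin d),
      (Uc d (m+1) (K+1) w : ℝ)
        ≤ ((1 + ((Nat.card (PInj (Fin d)) : ℝ) - 1) / (Nat.card (PInj (Fin d)) : ℝ)) / 2) ^ m
          * (((Nat.card (PInj (Fin d)) : ℝ) - 1) / (Nat.card (PInj (Fin d)) : ℝ)) ^ K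
          * ((Nat.card (Pn d (m+1)) : ℝ)) ^ (K+1) := by
  classical
  have hNI := NI_two hd
  set NI : ℕ := Nat.card (PInj (Fin d)) with hNIdef
  have hNIR : (2 : ℝ) ≤ (NI : ℝ) := by exact_mod_cast hNI
  set σ : ℝ := ((NI : ℝ) - 1) / (NI : ℝ) with hσdef
  set ρ : ℝ := (1 + σ) / 2 with hρdef
  have hσ0 : 0 ≤ σ := by
    apply div_nonneg <;> linarith
  have hσ1 : σ < 1 := by
    rw [hσdef, div_lt_one (by linarith)]
    linarith
  have hρ0 : 0 ≤ ρ := by rw [hρdef]; linarith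
  have hρ1 : ρ < 1 := by rw [hρdef]; linarith
  intro m
  induction m with
  | zero =>
      intro K w
      -- base case: level 1
      have hcount : (Uc d 1 (K+1) w : ℕ) ≤ (NI - 1)^(K+1) := by
        rw [Uc_succ_eq]
        haveI : Subsingleton (Pn d 0) := inferInstanceAs (Subsingleton PUnit)
        have hfib : ∀ bs : Fin (K+1) → PInj (Fin d),
            Nat.card {fs : ∀ j, ({x : Fin d // ((bs j).1 x).isSome} → Pn d 0) //
              Surv (d := d) (m := 1) (fun j => (⟨bs j, fs j⟩ : Pn d 1)) w}
            ≤ if (chainEval (List.ofFn bs) (w 0)).isSome then 1 else 0 := by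
          intro bs
          by_cases hne : Nonempty {fs : ∀ j, ({x : Fin d // ((bs j).1 x).isSome} → Pn d 0) //
              Surv (d := d) (m := 1) (fun j => (⟨bs j, fs j⟩ : Pn d 1)) w}
          · obtain ⟨fs, hS⟩ := hne
            have hchain : (chainEval (List.ofFn bs) (w 0)).isSome := by
              have hTop := hTop_of_Surv hS (K+1)
              rw [pIter_Phi_eq_chainEval _ _ _ le_rfl] at hTop
              rw [List.take_of_length_le (by simp)] at hTop
              rw [Option.isSome_map] at hTop
              exact hTop
            rw [if_pos hchain]
            exact Finite.card_le_one_iff_subsingleton.mpr inferInstance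
          · rw [not_nonempty_iff] at hne
            simp [Nat.card_of_isEmpty]
        calc ∑ bs : Fin (K+1) → PInj (Fin d), Nat.card {fs : ∀ j,
              ({x : Fin d // ((bs j).1 x).isSome} → Pn d 0) //
              Surv (d := d) (m := 1) (fun j => (⟨bs j, fs j⟩ : Pn d 1)) w}
            ≤ ∑ bs : Fin (K+1) → PInj (Fin d),
                (if (chainEval (List.ofFn bs) (w 0)).isSome then 1 else 0) :=
              Finset.sum_le_sum (fun bs _ => hfib bs)
          _ = Fintype.card {bs : Fin (K+1) → PInj (Fin d) //
                (chainEval (List.ofFn bs) (w 0)).isSome} := by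
              rw [Fintype.card_subtype]
              rw [Finset.card_eq_sum_ones, Finset.sum_filter]
          _ ≤ (NI - 1)^(K+1) := by
              rw [← Nat.card_eq_fintype_card]
              exact chain_count (w 0) (K+1)
      have hcast : (Uc d 1 (K+1) w : ℝ) ≤ ((NI : ℝ) - 1)^(K+1) := by
        calc (Uc d 1 (K+1) w : ℝ) ≤ ((NI - 1 : ℕ) : ℝ)^(K+1) := by exact_mod_cast hcount
          _ = ((NI : ℝ) - 1)^(K+1) := by
              congr 1
              have : (1 : ℕ) ≤ NI := by omega
              push_cast [this]
              ring
      refine hcast.trans ?_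
      rw [pow_zero, one_mul, Pn_card_one, ← hNIdef]
      have hNpos : (0 : ℝ) < (NI : ℝ) := by linarith
      have hfact : ((NI : ℝ) - 1)^(K+1) = σ^(K+1) * (NI : ℝ)^(K+1) := by
        rw [hσdef, div_pow, div_mul_eq_mul_div, mul_div_assoc]
        rw [div_self (by positivity), mul_one]
      rw [hfact]
      have : σ^(K+1) ≤ σ^K := pow_le_pow_of_le_one hσ0 (le_of_lt hσ1) (by omega)
      have hNpow : (0:ℝ) ≤ (NI : ℝ)^(K+1) := by positivity
      exact mul_le_mul_of_nonneg_right this hNpow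
  | succ m ih =>
      intro K w
      set L : ℕ := K + 1 with hLdef
      set P : Type := Pn d (m+1) with hPdef
      set NP : ℕ := Nat.card P with hNPdef
      have hNP1 : 1 ≤ NP := by
        rw [hNPdef, hPdef]
        haveI := Pn_nonempty (d := d) (m+1)
        exact Finite.card_pos
      set i : Fin d := w 0 with hidef
      set W : (Fin L → PInj (Fin d)) → ℝ := fun bs => ∏ j, (NP : ℝ)^(domCard (bs j)) with hW
      have hW0 : ∀ bs, 0 ≤ W bs := by
        intro bs; apply Finset.prod_nonneg; intro j _; positivity
      -- per-fiber bound
      have perbs : ∀ bs : Fin L → PInj (Fin d),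
          (Nat.card {fs : ∀ j, ({x : Fin d // ((bs j).1 x).isSome} → P) //
              Surv (d := d) (m := m+2) (fun j => (⟨bs j, fs j⟩ : Pn d (m+2))) w} : ℝ)
            ≤ ρ^m * W bs * (if chainEval (List.ofFn bs) i = some i then σ^K else σ^(2*K+1)) := by
        intro bs
        by_cases hne : Nonempty {fs : ∀ j, ({x : Fin d // ((bs j).1 x).isSome} → P) //
            Surv (d := d) (m := m+2) (fun j => (⟨bs j, fs j⟩ : Pn d (m+2))) w}
        swap
        · rw [not_nonempty_iff] at hne
          rw [Nat.card_of_isEmpty]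
          have : (0:ℝ) ≤ ρ^m * W bs * (if chainEval (List.ofFn bs) i = some i
              then σ^K else σ^(2*K+1)) := by
            apply mul_nonneg (mul_nonneg (by positivity) (hW0 bs))
            split <;> positivity
          simpa using this
        obtain ⟨fs0, hS0⟩ := hne
        obtain ⟨T, hT0, hTNZ, ι, hιinj, hall, hdich1, hdich2⟩ :=
          step_extract bs w ⟨fs0, hS0⟩
        -- injection into constrained functions on the sigma type
        have hinj2 : Function.Injective
            (fun (fs : {fs : ∀ j, ({x : Fin d // ((bs j).1 x).isSome} → P) //
                Surv (d := d) (m := m+2) (fun j => (⟨bs j, fs j⟩ : Pn d (m+2))) w}) =>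
              (⟨fun p : (Σ j : Fin L, {x : Fin d // ((bs j).1 x).isSome}) => fs.1 p.1 p.2, by
                have := hall fs.1 fs.2
                exact this⟩ :
                {F : (Σ j : Fin L, {x : Fin d // ((bs j).1 x).isSome}) → P //
                  Surv (F ∘ ι) (Fin.tail w)})) := by
          intro f₁ f₂ h
          apply Subtype.ext
          funext j x
          exact congrFun (congrArg Subtype.val h) ⟨j, x⟩
        have hc1 := Nat.card_le_card_of_injective _ hinj2
        have hc2 := card_comp_le ι hιinj (fun G => Surv G (Fin.tail w))
        haveI : NeZero T := hTNZ
        have hcT : Nat.card {G : Fin T → P // Surv G (Fin.tail w)} = Uc d (m+1) T (Fin.tail w) := rfl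
        have hIcard : Fintype.card (Σ j : Fin L, {x : Fin d // ((bs j).1 x).isSome})
            = ∑ j, domCard (bs j) := by
          rw [Fintype.card_sigma]
          rfl
        have hTle : T ≤ Fintype.card (Σ j : Fin L, {x : Fin d // ((bs j).1 x).isSome}) := by
          have := Fintype.card_le_of_injective ι hιinj
          simpa using this
        -- combine
        have hmain : (Nat.card {fs : ∀ j, ({x : Fin d // ((bs j).1 x).isSome} → P) //
              Surv (d := d) (m := m+2) (fun j => (⟨bs j, fs j⟩ : Pn d (m+2))) w} : ℝ)
            ≤ (Uc d (m+1) T (Fin.tail w) : ℝ) * (NP:ℝ)^(Fintype.card (Σ j : Fin L, {x : Fin d // ((bs j).1 x).isSome}) - T) := by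
          have := hc1.trans hc2
          rw [hcT] at this
          calc (Nat.card {fs : ∀ j, ({x : Fin d // ((bs j).1 x).isSome} → P) //
              Surv (d := d) (m := m+2) (fun j => (⟨bs j, fs j⟩ : Pn d (m+2))) w} : ℝ)
              ≤ ((Uc d (m+1) T (Fin.tail w) * (Fintype.card P)^(Fintype.card (Σ j : Fin L, {x : Fin d // ((bs j).1 x).isSome}) - T) : ℕ) : ℝ) := by
                exact_mod_cast this
            _ = (Uc d (m+1) T (Fin.tail w) : ℝ) * (NP:ℝ)^(Fintype.card (Σ j : Fin L, {x : Fin d // ((bs j).1 x).isSome}) - T) := by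
                push_cast [hNPdef, Nat.card_eq_fintype_card]
                ring
        -- apply the inductive hypothesis at T = (T-1)+1
        clear hc1 hc2 hinj2
        have hT1 : T - 1 + 1 = T := by omega
        have hIH0 := ih (T - 1) (Fin.tail w)
        have hUcongr : Uc d (m+1) (T-1+1) (Fin.tail w) = Uc d (m+1) T (Fin.tail w) := by
          congr 1
        have hIH : (Uc d (m+1) T (Fin.tail w) : ℝ) ≤ ρ^m * σ^(T-1) * (NP:ℝ)^T := by
          have h2 : (NP:ℝ)^(T-1+1) = (NP:ℝ)^T := by rw [hT1]
          rw [← hUcongr, ← h2]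
          exact hIH0
        have hWeq : (NP:ℝ)^T * (NP:ℝ)^(Fintype.card (Σ j : Fin L, {x : Fin d // ((bs j).1 x).isSome}) - T)
            = (NP:ℝ)^(Fintype.card (Σ j : Fin L, {x : Fin d // ((bs j).1 x).isSome})) := by
          rw [← pow_add]
          congr 1
          omega
        have hWbs : ((NP:ℝ))^(Fintype.card (Σ j : Fin L, {x : Fin d // ((bs j).1 x).isSome})) = W bs := by
          simp only [hW]
          rw [Finset.prod_pow_eq_pow_sum, hIcard]
        have hchain : σ^(T-1) ≤ (if chainEval (List.ofFn bs) i = some i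
            then σ^K else σ^(2*K+1)) := by
          split
          · rename_i hc
            have hTL := hdich1 hc
            have hTK : T - 1 = K := by omega
            rw [hTK]
          · rename_i hc
            have hTL := hdich2 hc
            refine pow_le_pow_of_le_one hσ0 (le_of_lt hσ1) ?_
            omega
        calc (Nat.card {fs : ∀ j, ({x : Fin d // ((bs j).1 x).isSome} → P) //
              Surv (d := d) (m := m+2) (fun j => (⟨bs j, fs j⟩ : Pn d (m+2))) w} : ℝ)
            ≤ (Uc d (m+1) T (Fin.tail w) : ℝ)
                * (NP:ℝ)^(Fintype.card (Σ j : Fin L, {x : Fin d // ((bs j).1 x).isSome}) - T) := hmain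
          _ ≤ (ρ^m * σ^(T-1) * (NP:ℝ)^T)
                * (NP:ℝ)^(Fintype.card (Σ j : Fin L, {x : Fin d // ((bs j).1 x).isSome}) - T) := by
              apply mul_le_mul_of_nonneg_right _ (by positivity)
              exact hIH
          _ = ρ^m * σ^(T-1) * (NP:ℝ)^(Fintype.card (Σ j : Fin L, {x : Fin d // ((bs j).1 x).isSome})) := by
              rw [mul_assoc, mul_assoc, hWeq]
              ring
          _ = ρ^m * σ^(T-1) * W bs := by rw [hWbs]
          _ ≤ ρ^m * (if chainEval (List.ofFn bs) i = some i then σ^K else σ^(2*K+1)) * W bs := by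
              apply mul_le_mul_of_nonneg_right _ (hW0 bs)
              exact mul_le_mul_of_nonneg_left hchain (by positivity)
          _ = ρ^m * W bs * (if chainEval (List.ofFn bs) i = some i then σ^K else σ^(2*K+1)) := by
              ring
      -- sum over bs
      have hUc : (Uc d (m+2) L w : ℝ) = ∑ bs : Fin L → PInj (Fin d),
          (Nat.card {fs : ∀ j, ({x : Fin d // ((bs j).1 x).isSome} → P) //
            Surv (d := d) (m := m+2) (fun j => (⟨bs j, fs j⟩ : Pn d (m+2))) w} : ℝ) := by
        rw [Uc_succ_eq]
        push_cast
        rfl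
      set A := Finset.univ.filter
          (fun bs : Fin L → PInj (Fin d) => chainEval (List.ofFn bs) i = some i) with hA
      set S : ℝ := ∑ bs : Fin L → PInj (Fin d), W bs with hS
      set S₁ : ℝ := ∑ bs ∈ A, W bs with hS₁
      have hS₁0 : 0 ≤ S₁ := Finset.sum_nonneg (fun bs _ => hW0 bs)
      have hS20 : 0 ≤ S - S₁ := by
        rw [hS, hS₁, ← Finset.sum_filter_add_sum_filter_not Finset.univ
          (fun bs : Fin L → PInj (Fin d) => chainEval (List.ofFn bs) i = some i) W]
        have : 0 ≤ ∑ bs ∈ Finset.univ.filter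
            (fun bs : Fin L → PInj (Fin d) => ¬chainEval (List.ofFn bs) i = some i), W bs :=
          Finset.sum_nonneg (fun bs _ => hW0 bs)
        rw [← hA]
        linarith
      have hη : 2 * S₁ ≤ S := by
        have := two_mul_filter_sum_le (L := L) hd i (fun b => NP^(domCard b))
          (fun e b => by simp [domCard_pswap])
        have hcast : (2 * ∑ bs ∈ Finset.univ.filter
            (fun bs : Fin L → PInj (Fin d) => chainEval (List.ofFn bs) i = some i),
            ∏ j, NP^(domCard (bs j)) : ℕ) ≤
            (∑ bs : Fin L → PInj (Fin d), ∏ j, NP^(domCard (bs j)) : ℕ) := this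
        have h2 : ((2 * ∑ bs ∈ A, ∏ j, NP^(domCard (bs j)) : ℕ) : ℝ)
            ≤ ((∑ bs : Fin L → PInj (Fin d), ∏ j, NP^(domCard (bs j)) : ℕ) : ℝ) := by
          exact_mod_cast hcast
        push_cast at h2
        rw [hS₁, hS, hW]
        convert h2 using 2 <;> push_cast <;> ring
      have hsplit : ∑ bs : Fin L → PInj (Fin d),
          (W bs * (if chainEval (List.ofFn bs) i = some i then σ^K else σ^(2*K+1)))
          = σ^K * S₁ + σ^(2*K+1) * (S - S₁) := by
        rw [← Finset.sum_filter_add_sum_filter_not Finset.univ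
          (fun bs : Fin L → PInj (Fin d) => chainEval (List.ofFn bs) i = some i)]
        have h1 : ∑ bs ∈ A, W bs * (if chainEval (List.ofFn bs) i = some i
            then σ^K else σ^(2*K+1)) = σ^K * S₁ := by
          rw [hS₁, Finset.mul_sum]
          apply Finset.sum_congr rfl
          intro bs hbs
          rw [hA, Finset.mem_filter] at hbs
          rw [if_pos hbs.2]
          ring
        have h2 : ∑ bs ∈ Finset.univ.filter
            (fun bs : Fin L → PInj (Fin d) => ¬chainEval (List.ofFn bs) i = some i),
            W bs * (if chainEval (List.ofFn bs) i = some i then σ^K else σ^(2*K+1))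
            = σ^(2*K+1) * (S - S₁) := by
          have hcomp : ∑ bs ∈ Finset.univ.filter
              (fun bs : Fin L → PInj (Fin d) => ¬chainEval (List.ofFn bs) i = some i), W bs
              = S - S₁ := by
            rw [hS, hS₁, ← Finset.sum_filter_add_sum_filter_not Finset.univ
              (fun bs : Fin L → PInj (Fin d) => chainEval (List.ofFn bs) i = some i) W, ← hA]
            ring
          rw [← hcomp, Finset.mul_sum]
          apply Finset.sum_congr rfl
          intro bs hbs
          rw [Finset.mem_filter] at hbs
          rw [if_neg hbs.2]
          ring
        rw [← hA, h1, h2]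
      calc (Uc d (m+2) L w : ℝ)
          ≤ ∑ bs : Fin L → PInj (Fin d),
            (ρ^m * W bs * (if chainEval (List.ofFn bs) i = some i then σ^K else σ^(2*K+1))) := by
            rw [hUc]
            exact Finset.sum_le_sum (fun bs _ => perbs bs)
        _ = ρ^m * (σ^K * S₁ + σ^(2*K+1) * (S - S₁)) := by
            rw [← hsplit, Finset.mul_sum]
            apply Finset.sum_congr rfl
            intro bs _
            ring
        _ ≤ ρ^m * (σ^K * S₁ + (σ^K * σ) * (S - S₁)) := by
            apply mul_le_mul_of_nonneg_left _ (by positivity)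
            apply add_le_add_right
            apply mul_le_mul_of_nonneg_right _ hS20
            calc σ^(2*K+1) = σ^K * σ^(K+1) := by rw [← pow_add]; congr 1; omega
              _ ≤ σ^K * σ^1 := by
                  apply mul_le_mul_of_nonneg_left _ (by positivity)
                  exact pow_le_pow_of_le_one hσ0 (le_of_lt hσ1) (by omega)
              _ = σ^K * σ := by rw [pow_one]
        _ = ρ^m * σ^K * (S₁ + σ * (S - S₁)) := by ring
        _ ≤ ρ^m * σ^K * (ρ * S) := by
            apply mul_le_mul_of_nonneg_left _ (by positivity)
            have hfac : (0:ℝ) ≤ (1 - σ) * (S - 2 * S₁) := by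
              apply mul_nonneg
              · linarith
              · linarith
            rw [hρdef]
            nlinarith
        _ = ρ^(m+1) * σ^K * S := by ring
        _ = ρ^(m+1) * σ^K * ((Nat.card (Pn d (m+2)) : ℝ))^L := by
            have hSval : S = ((Nat.card (Pn d (m+2)) : ℝ))^L := by
              rw [hS, hW]
              have h := sum_weight (d := d) (m := m+1) (L := L)
              calc ∑ bs : Fin L → PInj (Fin d), ∏ j : Fin L, (NP:ℝ)^(domCard (bs j))
                  = ((∑ bs : Fin L → PInj (Fin d), ∏ j : Fin L, NP^(domCard (bs j)) : ℕ) : ℝ) := by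
                    push_cast
                    rfl
                _ = (((Nat.card (Pn d (m+2)))^L : ℕ) : ℝ) := by rw [h]
                _ = ((Nat.card (Pn d (m+2)) : ℝ))^L := by push_cast; ring
            rw [hSval]

end MainBound


section Final
variable {d : ℕ}

theorem pIter_cover_one {α : Type*} (g : α → Option α) :
    ∀ (t : ℕ) (v : α), pIter (cover (L := 1) (fun _ => g)) t (v, (0 : Fin 1))
      = (pIter g t v).map (fun u => (u, (0 : Fin 1))) := by
  intro t
  induction t with
  | zero => intro v; rfl
  | succ t ih =>
      intro v
      rw [Aux.pIter_succ', Aux.pIter_succ', ih]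
      cases pIter g t v with
      | none => rfl
      | some u =>
          simp only [Option.map_some, Option.bind_some]
          show cover (fun _ => g) (u, 0) = _
          simp only [cover]
          cases g u with
          | none => rfl
          | some u' => rfl

theorem Surv_one_iff {n : ℕ} (y : Pn d n) (v : Fin n → Fin d) :
    Surv (fun _ : Fin 1 => y) v ↔ ∀ m, 1 ≤ m → (pIter (Pn.act y) m v).isSome := by
  have hps : ∀ t, pIter (Psi (fun _ : Fin 1 => y)) t (v, (0:Fin 1))
      = (pIter (Pn.act y) t v).map (fun u => (u, (0 : Fin 1))) := by
    intro t
    exact pIter_cover_one (Pn.act y) t v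
  constructor
  · intro hS m hm
    have := hS m
    rw [hps m] at this
    rwa [Option.isSome_map] at this
  · intro h t
    rw [hps t, Option.isSome_map]
    cases t with
    | zero => rfl
    | succ t => exact h (t+1) (by omega)

theorem Uc_one_eq {n : ℕ} (v : Fin n → Fin d) :
    Uc d n 1 v = Nat.card {y : Pn d n // ∀ m, 1 ≤ m → (pIter (Pn.act y) m v).isSome} := by
  apply Nat.card_congr
  refine Equiv.subtypeEquiv (Equiv.funUnique (Fin 1) (Pn d n)) ?_
  intro ys
  have hys : ys = fun _ : Fin 1 => ys default := by
    funext j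
    congr 1
    exact Subsingleton.elim j default
  constructor
  · intro hS
    rw [Equiv.funUnique]
    refine (Surv_one_iff (ys default) v).mp ?_
    rw [← hys]
    exact hS
  · intro h
    show Surv ys v
    rw [hys]
    exact (Surv_one_iff (ys default) v).mpr h

theorem card_swap {α β : Type*} [Fintype α] [Fintype β] (R : α → β → Prop) :
    ∑ a, Nat.card {b // R a b} = ∑ b, Nat.card {a // R a b} := by
  have e1 : (Σ a, {b // R a b}) ≃ (Σ b, {a // R a b}) := {
    toFun := fun p => ⟨p.2.1, p.1, p.2.2⟩
    invFun := fun p => ⟨p.2.1, p.1, p.2.2⟩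
    left_inv := by rintro ⟨a, b, h⟩; rfl
    right_inv := by rintro ⟨b, a, h⟩; rfl }
  calc ∑ a, Nat.card {b // R a b} = Nat.card (Σ a, {b // R a b}) := (nat_card_sigma _).symm
    _ = Nat.card (Σ b, {a // R a b}) := Nat.card_congr e1
    _ = ∑ b, Nat.card {a // R a b} := nat_card_sigma _

theorem sum_rk_eq {n : ℕ} : ∑ y : Pn d n, Pn.rk y = ∑ v : Fin n → Fin d, Uc d n 1 v := by
  have h1 : ∀ y : Pn d n, Pn.rk y
      = Nat.card {v : Fin n → Fin d // ∀ m, 1 ≤ m → (pIter (Pn.act y) m v).isSome} :=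
    fun y => rfl
  calc ∑ y : Pn d n, Pn.rk y
      = ∑ y : Pn d n, Nat.card {v : Fin n → Fin d //
          ∀ m, 1 ≤ m → (pIter (Pn.act y) m v).isSome} := Finset.sum_congr rfl (fun y _ => h1 y)
    _ = ∑ v : Fin n → Fin d, Nat.card {y : Pn d n //
          ∀ m, 1 ≤ m → (pIter (Pn.act y) m v).isSome} :=
        card_swap (fun y v => ∀ m, 1 ≤ m → (pIter (Pn.act y) m v).isSome)
    _ = ∑ v : Fin n → Fin d, Uc d n 1 v :=
        Finset.sum_congr rfl (fun v _ => (Uc_one_eq v).symm)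

theorem rk_zero (y : Pn d 0) : Pn.rk y = 1 := by
  rw [Pn.rk]
  have hall : ∀ (m : ℕ) (v : Fin 0 → Fin d), pIter (Pn.act y) m v = some v := by
    intro m
    induction m with
    | zero => intro v; rfl
    | succ m ih =>
        intro v
        rw [Aux.pIter_succ']
        rw [ih v]
        rfl
  rw [Nat.card_eq_one_iff_unique]
  constructor
  · constructor
    rintro ⟨v1, h1⟩ ⟨v2, h2⟩
    apply Subtype.ext
    funext j
    exact j.elim0
  · exact ⟨⟨fun j => j.elim0, fun m _ => by rw [hall m]; rfl⟩⟩

end Final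


/-- With `ξ_n(y) = rk(y)/d^n`, `N_n = |P_n|` and `R_n = Σ_{y ∈ P_n} rk(y)`:
the expectation of `ξ_n` over uniform `y ∈ P_n` equals `R_n/(d^n N_n)`, this quantity
tends to `0` as `n → ∞`, and the convergence is exponentially fast. -/
theorem expectation_fraction_nonzero_tendsto_zero_exponentially
    (d : ℕ) (hd : 2 ≤ d) :
    (∀ n : ℕ,
      (∑ y : Pn d n, (Pn.rk y : ℝ) / (d : ℝ) ^ n) / (Fintype.card (Pn d n) : ℝ)
        = (∑ y : Pn d n, (Pn.rk y : ℝ))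
            / ((d : ℝ) ^ n * (Fintype.card (Pn d n) : ℝ)))
    ∧
    Filter.Tendsto
      (fun n : ℕ => (∑ y : Pn d n, (Pn.rk y : ℝ))
        / ((d : ℝ) ^ n * (Fintype.card (Pn d n) : ℝ)))
      Filter.atTop (nhds 0)
    ∧
    ∃ C : ℝ, 0 < C ∧ ∃ q : ℝ, q ∈ Set.Ioo (0 : ℝ) 1 ∧ ∀ n : ℕ,
      (∑ y : Pn d n, (Pn.rk y : ℝ)) / ((d : ℝ) ^ n * (Fintype.card (Pn d n) : ℝ))
        ≤ C * q ^ n := by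
  classical
  have hNI := NI_two (d := d) hd
  set NI : ℕ := Nat.card (PInj (Fin d)) with hNIdef
  have hNIR : (2:ℝ) ≤ (NI : ℝ) := by exact_mod_cast hNI
  set σ : ℝ := ((NI:ℝ)-1)/(NI:ℝ) with hσdef
  set q : ℝ := (1+σ)/2 with hqdef
  have hσ0 : 0 ≤ σ := div_nonneg (by linarith) (by linarith)
  have hσ1 : σ < 1 := by rw [hσdef, div_lt_one (by linarith)]; linarith
  have hq0 : 0 < q := by rw [hqdef]; linarith
  have hq1 : q < 1 := by rw [hqdef]; linarith
  have hdR : (0:ℝ) < (d:ℝ) := by exact_mod_cast (by omega : 0 < d)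
  have hNn : ∀ n, (0:ℝ) < (Fintype.card (Pn d n) : ℝ) := by
    intro n
    have := Pn_nonempty (d := d) n
    exact_mod_cast Fintype.card_pos
  -- the key bound
  have key : ∀ n : ℕ, (∑ y : Pn d n, (Pn.rk y : ℝ))
      / ((d : ℝ) ^ n * (Fintype.card (Pn d n) : ℝ)) ≤ (1/q) * q ^ n := by
    intro n
    have hden : (0:ℝ) < (d:ℝ)^n * (Fintype.card (Pn d n) : ℝ) := by
      have := hNn n
      positivity
    cases n with
    | zero =>
        have hcard0 : (Fintype.card (Pn d 0) : ℝ) = 1 := by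
          have : Nat.card (Pn d 0) = 1 := Nat.card_eq_one_iff_unique.mpr
            ⟨inferInstanceAs (Subsingleton PUnit), inferInstanceAs (Nonempty PUnit)⟩
          rw [Nat.card_eq_fintype_card] at this
          exact_mod_cast this
        have hsum0 : (∑ y : Pn d 0, (Pn.rk y : ℝ)) = (Fintype.card (Pn d 0) : ℝ) := by
          rw [Fintype.card_eq_sum_ones]
          push_cast
          exact Finset.sum_congr rfl (fun y _ => by rw [rk_zero y]; norm_num)
        rw [hsum0, hcard0, pow_zero, pow_zero, one_mul, mul_one, div_one]
        rw [le_div_iff₀ hq0, one_mul]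
        linarith
    | succ n' =>
        have hnum : (∑ y : Pn d (n'+1), (Pn.rk y : ℝ))
            ≤ (d:ℝ)^(n'+1) * (q^n' * (Fintype.card (Pn d (n'+1)) : ℝ)) := by
          have hcast : (∑ y : Pn d (n'+1), (Pn.rk y : ℝ))
              = ∑ v : Fin (n'+1) → Fin d, (Uc d (n'+1) 1 v : ℝ) := by
            rw [← Nat.cast_sum, ← Nat.cast_sum, sum_rk_eq]
          rw [hcast]
          have hone : ∀ v : Fin (n'+1) → Fin d,
              (Uc d (n'+1) 1 v : ℝ) ≤ q^n' * (Fintype.card (Pn d (n'+1)) : ℝ) := by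
            intro v
            have hb := main_bound hd n' 0 v
            rw [pow_zero, pow_one, mul_one] at hb
            have hcc : q ^ n' * (Nat.card (Pn d (n'+1)) : ℝ)
                = q ^ n' * (Fintype.card (Pn d (n'+1)) : ℝ) := by
              rw [Nat.card_eq_fintype_card]
            rw [← hcc]
            exact hb
          calc ∑ v : Fin (n'+1) → Fin d, (Uc d (n'+1) 1 v : ℝ)
              ≤ ∑ _v : Fin (n'+1) → Fin d, q^n' * (Fintype.card (Pn d (n'+1)) : ℝ) :=
                Finset.sum_le_sum (fun v _ => hone v)
            _ = (Fintype.card (Fin (n'+1) → Fin d) : ℝ)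
                  * (q^n' * (Fintype.card (Pn d (n'+1)) : ℝ)) := by
                rw [Finset.sum_const, Finset.card_univ, nsmul_eq_mul]
            _ = (d:ℝ)^(n'+1) * (q^n' * (Fintype.card (Pn d (n'+1)) : ℝ)) := by
                congr 1
                rw [Fintype.card_fun, Fintype.card_fin, Fintype.card_fin]
                push_cast
                ring
        rw [div_le_iff₀ hden]
        have hqq : (1/q) * q^(n'+1) = q^n' := by
          rw [pow_succ]
          field_simp
        rw [hqq]
        calc (∑ y : Pn d (n'+1), (Pn.rk y : ℝ))
            ≤ (d:ℝ)^(n'+1) * (q^n' * (Fintype.card (Pn d (n'+1)) : ℝ)) := hnum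
          _ = q^n' * ((d:ℝ)^(n'+1) * (Fintype.card (Pn d (n'+1)) : ℝ)) := by ring
  have hnonneg : ∀ n : ℕ, 0 ≤ (∑ y : Pn d n, (Pn.rk y : ℝ))
      / ((d : ℝ) ^ n * (Fintype.card (Pn d n) : ℝ)) := by
    intro n
    apply div_nonneg
    · exact Finset.sum_nonneg (fun y _ => by positivity)
    · have := hNn n
      positivity
  refine ⟨?_, ?_, ?_⟩
  · intro n
    rw [← Finset.sum_div, div_div]
  · apply squeeze_zero hnonneg key
    have h1 : Filter.Tendsto (fun n : ℕ => q ^ n) Filter.atTop (nhds 0) :=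
      tendsto_pow_atTop_nhds_zero_of_lt_one (le_of_lt hq0) hq1
    have h2 := h1.const_mul (1/q)
    simpa using h2
  · exact ⟨1/q, by positivity, q, ⟨hq0, hq1⟩, key⟩
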